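/- Let 1 < α < 2 and β₁ ∈ ℝ satisfy 6α + 2β₁ > 9, and let K, m > 0. Suppose that for each small ε > 0 and each j = 1,…,N_ε there is a vector field H_j : ℝ³ → ℝ³ with |H_j(x)| ≤ K m ε^{β₁} Vol(𝒫_j^ε) |x − x_j^ε|^{−3} whenever |x − x_j^ε| ≥ dε/2, and that each particle 𝒫_i^ε carries a magnetization density m_i with |m_i(x)| ≤ m ε^{β₁} on 𝒫_i^ε. Then there is C > 0 independent of ε such that Σ_{i ≠ j} ∫_{𝒫_i^ε} |H_j · m_i| dV ≤ C ε^{6α + 2β₁ − 9}, and in particular this sum tends to 0 as ε → 0. -/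

import Mathlib

/-!
For small `ε` a particle has radius at most `a ε^α ≤ dε/2`, since `α > 1`, so every point of
`𝒫_i^ε` lies at distance at least `dε/2` from any other centre `x_j^ε`. There the dipole bound
gives `|H_j| ≲ ε^{β₁ + 3α - 3}`, hence each ordered pair `i ≠ j` contributes
`≲ ε^{3α} · ε^{β₁ + 3α - 3} · ε^{β₁}`, and there are at most `N² ε⁻⁶` pairs.
-/

open MeasureTheory Filter Metric Set
open scoped RealInnerProductSpace ENNReal NNReal Topology

noncomputable section

/-- Euclidean three-space. -/
abbrev E3 : Type := EuclideanSpace ℝ (Fin 3)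

/-- The closed prolate spheroid centered at the origin with semi-axis `A` along the
`x`- and `y`-directions and semi-axis `B` along the `z`-direction. -/
def sph (A B : ℝ) : Set E3 :=
  {x : E3 | (x 0) ^ 2 / A ^ 2 + (x 1) ^ 2 / A ^ 2 + (x 2) ^ 2 / B ^ 2 ≤ 1}

/-- The boundary surface of the spheroid `sph A B`. -/
def sphS (A B : ℝ) : Set E3 :=
  {x : E3 | (x 0) ^ 2 / A ^ 2 + (x 1) ^ 2 / A ^ 2 + (x 2) ^ 2 / B ^ 2 = 1}

/-- Gradient of the defining function of the spheroid (up to a factor `2`). -/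
def sphGrad (A B : ℝ) (x : E3) : E3 :=
  (WithLp.equiv 2 (Fin 3 → ℝ)).symm ![x 0 / A ^ 2, x 1 / A ^ 2, x 2 / B ^ 2]

/-- Outward unit normal to the surface of the spheroid `sph A B`. -/
def sphN (A B : ℝ) (x : E3) : E3 := ‖sphGrad A B x‖⁻¹ • sphGrad A B x

/-- A rotation of `ℝ³`: a linear isometry with determinant one. -/
def IsRotation (R : E3 ≃ₗᵢ[ℝ] E3) : Prop :=
  LinearMap.det (R.toLinearEquiv : E3 →ₗ[ℝ] E3) = 1

/-- A particle: the image of the reference spheroid `sph A B` under `y ↦ c + s • R y`. -/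
def part (A B : ℝ) (c : E3) (s : ℝ) (R : E3 ≃ₗᵢ[ℝ] E3) : Set E3 :=
  (fun y => c + s • R y) '' sph A B

/-- The boundary surface of a particle. -/
def partS (A B : ℝ) (c : E3) (s : ℝ) (R : E3 ≃ₗᵢ[ℝ] E3) : Set E3 :=
  (fun y => c + s • R y) '' sphS A B

/-- The outward unit normal on the surface of a particle. -/
def partN (A B : ℝ) (c : E3) (s : ℝ) (R : E3 ≃ₗᵢ[ℝ] E3) (y : E3) : E3 :=
  R (sphN A B (s⁻¹ • R.symm (y - c)))

/-- Geometric configuration of the dilute ferronematic composite from the paper: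
a bounded smooth domain `Ω ⊂ ℝ³`; a reference closed prolate spheroid `𝒫 = sph b a`
with semi-minor axis `b` and semi-major axis `a` (`0 < b < a`), long axis along `z`;
exponent `1 < α < 2`; constants `0 < d < D`, `g ∈ ℝ`; and, for each `0 < ε < ε₀`,
particles `𝒫ᵢ^ε = xᵢ^ε + ε^α Rᵢ^ε 𝒫` (`i = 1,…,N_ε`) whose centers are `dε`-separated,
at mutual distance at most `Dε`, with the closed balls of radius `dε/2` around the
centers pairwise disjoint and contained in `Ω`, and `N_ε ≤ N ε⁻³`. -/
structure Config where
  Ω : Set E3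
  a : ℝ
  b : ℝ
  α : ℝ
  d : ℝ
  D : ℝ
  g : ℝ
  ε₀ : ℝ
  Nε : ℝ → ℕ
  xc : (ε : ℝ) → Fin (Nε ε) → E3
  Rot : (ε : ℝ) → Fin (Nε ε) → E3 ≃ₗᵢ[ℝ] E3
  NN : ℝ
  hΩo : IsOpen Ω
  hΩne : Ω.Nonempty
  hΩb : Bornology.IsBounded Ω
  hb : 0 < b
  hba : b < a
  hα1 : 1 < α
  hα2 : α < 2
  hd : 0 < d
  hdD : d < D
  hε₀ : 0 < ε₀
  hRot : ∀ ε i, IsRotation (Rot ε i)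
  hsep_lo : ∀ ε, 0 < ε → ε < ε₀ → ∀ i j, i ≠ j → d * ε ≤ dist (xc ε i) (xc ε j)
  hsep_hi : ∀ ε, 0 < ε → ε < ε₀ → ∀ i j, i ≠ j → dist (xc ε i) (xc ε j) ≤ D * ε
  hdisj : ∀ ε, 0 < ε → ε < ε₀ → ∀ i j, i ≠ j →
    Disjoint (Metric.closedBall (xc ε i) (d * ε / 2)) (Metric.closedBall (xc ε j) (d * ε / 2))
  hball : ∀ ε, 0 < ε → ε < ε₀ → ∀ i, Metric.closedBall (xc ε i) (d * ε / 2) ⊆ Ω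
  hNN : 0 < NN
  hcount : ∀ ε, 0 < ε → ε < ε₀ → (Nε ε : ℝ) ≤ NN * ε⁻¹ ^ 3

namespace Config

variable (cfg : Config)

/-- The `i`-th particle `𝒫ᵢ^ε`. -/
def particle (ε : ℝ) (i : Fin (cfg.Nε ε)) : Set E3 :=
  part cfg.b cfg.a (cfg.xc ε i) (ε ^ cfg.α) (cfg.Rot ε i)

/-- The surface `∂𝒫ᵢ^ε` of the `i`-th particle. -/
def surf (ε : ℝ) (i : Fin (cfg.Nε ε)) : Set E3 :=
  partS cfg.b cfg.a (cfg.xc ε i) (ε ^ cfg.α) (cfg.Rot ε i)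

/-- The outward unit normal on the surface of the `i`-th particle. -/
def normal (ε : ℝ) (i : Fin (cfg.Nε ε)) (y : E3) : E3 :=
  partN cfg.b cfg.a (cfg.xc ε i) (ε ^ cfg.α) (cfg.Rot ε i) y

/-- The perforated domain `Ω ∖ ∪ᵢ 𝒫ᵢ^ε` occupied by the liquid crystal. -/
def dom (ε : ℝ) : Set E3 := cfg.Ω \ ⋃ i, cfg.particle ε i

/-- The anchoring surface energy `g_ε ∫_{∪ᵢ∂𝒫ᵢ^ε} (u·ν)² dσ`, `g_ε = g ε^{3−2α}`. -/
def surfE (ε : ℝ) (u : E3 → E3) : ℝ :=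
  cfg.g * ε ^ (3 - 2 * cfg.α) *
    ∑ i : Fin (cfg.Nε ε), ∫ y in cfg.surf ε i, ⟪u y, cfg.normal ε i y⟫ ^ 2 ∂μH[2]

/-- The liquid crystal energy
`ℰ_ε[u] = ∫_{Ω∖∪ᵢ𝒫ᵢ^ε} (|∇u|² + (1−|u|²)²) dV + g_ε ∫_{∪ᵢ∂𝒫ᵢ^ε} (u·ν)² dσ`. -/
def lcE (ε : ℝ) (u : E3 → E3) : ℝ :=
  (∫ x in cfg.dom ε, (‖fderiv ℝ u x‖ ^ 2 + (1 - ‖u x‖ ^ 2) ^ 2)) + cfg.surfE ε u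

end Config

/-- Membership in `H¹(s; ℝ³)` (as a class of everywhere-defined representatives):
continuity, differentiability on `s`, and square integrability of the function and of
its gradient on `s`. -/
def H1on (s : Set E3) (u : E3 → E3) : Prop :=
  Continuous u ∧ (∀ x ∈ s, DifferentiableAt ℝ u x) ∧
    IntegrableOn (fun x => ‖u x‖ ^ 2) s ∧
    IntegrableOn (fun x => ‖fderiv ℝ u x‖ ^ 2) s

/-- Admissible functions for the variational problems: `H¹` regularity on the perforated
domain (together with the `L⁴` integrability granting a finite Ginzburg–Landau term) and
the Dirichlet condition `u = U` on `∂Ω`. -/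
def Config.Adm (cfg : Config) (U : E3 → E3) (ε : ℝ) (u : E3 → E3) : Prop :=
  H1on (cfg.dom ε) u ∧ IntegrableOn (fun x => ‖u x‖ ^ 4) (cfg.dom ε) ∧
    Set.EqOn u U (frontier cfg.Ω)

section Spheroid

variable {A B : ℝ}

theorem sph_subset_closedBall (hA : 0 < A) (hAB : A ≤ B) : sph A B ⊆ closedBall 0 B := by
  intro y hy
  have hB : 0 < B := hA.trans_le hAB
  have hy' : y 0 ^ 2 / B ^ 2 + y 1 ^ 2 / B ^ 2 + y 2 ^ 2 / B ^ 2 ≤ 1 := hy.trans' (by gcongr)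
  rw [mem_closedBall_zero_iff, ← pow_le_pow_iff_left₀ (norm_nonneg y) hB.le two_ne_zero,
    EuclideanSpace.real_norm_sq_eq, Fin.sum_univ_three]
  rwa [← add_div, ← add_div, div_le_one (by positivity)] at hy'

theorem isCompact_sph (hA : 0 < A) (hAB : A ≤ B) : IsCompact (sph A B) :=
  isCompact_of_isClosed_isBounded (isClosed_le (by fun_prop) continuous_const)
    (isBounded_closedBall.subset (sph_subset_closedBall hA hAB))

theorem part_subset_closedBall (hA : 0 < A) (hAB : A ≤ B) (c : E3) {s : ℝ} (hs : 0 ≤ s)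
    (R : E3 ≃ₗᵢ[ℝ] E3) : part A B c s R ⊆ closedBall c (s * B) := by
  rintro _ ⟨y, hy, rfl⟩
  rw [mem_closedBall, dist_eq_norm, add_sub_cancel_left, norm_smul, LinearIsometryEquiv.norm_map,
    Real.norm_of_nonneg hs]
  exact mul_le_mul_of_nonneg_left (mem_closedBall_zero_iff.1 (sph_subset_closedBall hA hAB hy)) hs

theorem isCompact_part (hA : 0 < A) (hAB : A ≤ B) (c : E3) (s : ℝ) (R : E3 ≃ₗᵢ[ℝ] E3) :
    IsCompact (part A B c s R) :=
  (isCompact_sph hA hAB).image (by fun_prop)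

theorem volume_real_part_le (hA : 0 < A) (hAB : A ≤ B) (c : E3) {s : ℝ} (hs : 0 ≤ s)
    (R : E3 ≃ₗᵢ[ℝ] E3) :
    volume.real (part A B c s R) ≤ s ^ 3 * volume.real (closedBall (0 : E3) B) := by
  have hB : 0 < B := hA.trans_le hAB
  calc volume.real (part A B c s R) ≤ volume.real (closedBall c (s * B)) :=
        measureReal_mono (part_subset_closedBall hA hAB c hs R) measure_closedBall_lt_top.ne
    _ = s ^ 3 * volume.real (closedBall (0 : E3) B) := by
        rw [Measure.addHaar_real_closedBall _ _ (by positivity),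
          Measure.addHaar_real_closedBall _ _ hB.le, finrank_euclideanSpace_fin]
        ring

end Spheroid

theorem Real.rpow_mul_le_mul_of_lt_rpow_inv {a c α ε : ℝ} (ha : 0 < a) (hc : 0 ≤ c) (hα : 1 < α)
    (hε : 0 < ε) (h : ε < (c / a) ^ (α - 1)⁻¹) : ε ^ α * a ≤ c * ε := by
  have h' : ε ^ (α - 1) < c / a :=
    (Real.lt_rpow_inv_iff_of_pos hε.le (by positivity) (by linarith)).1 h
  rw [Real.rpow_sub_one hε.ne', div_lt_div_iff₀ hε ha] at h'
  linarith

theorem setIntegral_abs_inner_le {X F : Type*} [MeasurableSpace X] [NormedAddCommGroup F]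
    [InnerProductSpace ℝ F] {μ : Measure X} {s : Set X} (hs : μ s < ∞) {H M : X → F} {CH CM : ℝ}
    (hH : ∀ x ∈ s, ‖H x‖ ≤ CH) (hM : ∀ x ∈ s, ‖M x‖ ≤ CM) :
    ∫ x in s, |⟪H x, M x⟫| ∂μ ≤ CH * CM * μ.real s := by
  refine (le_abs_self _).trans
    (norm_setIntegral_le_of_norm_le_const (f := fun x => |⟪H x, M x⟫|) hs fun x hx => ?_)
  rw [Real.norm_eq_abs, abs_abs]
  exact (abs_real_inner_le_norm _ _).trans
    (mul_le_mul (hH x hx) (hM x hx) (norm_nonneg _) ((norm_nonneg _).trans (hH x hx)))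

theorem sum_sum_ite_zero_le_card_sq_mul {ι : Type*} [Fintype ι] [DecidableEq ι]
    (f : ι → ι → ℝ) {c : ℝ} (hc : 0 ≤ c) (h : ∀ i j, i ≠ j → f i j ≤ c) :
    ∑ i, ∑ j, (if i = j then 0 else f i j) ≤ (Fintype.card ι : ℝ) ^ 2 * c := by
  calc ∑ i, ∑ j, (if i = j then 0 else f i j) ≤ ∑ _i : ι, ∑ _j : ι, c := by
        gcongr with i _ j _
        split_ifs with hij
        exacts [hc, h i j hij]
    _ = (Fintype.card ι : ℝ) ^ 2 * c := by simp [sq, mul_assoc]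

theorem tendsto_nhdsGT_zero_of_le_mul_rpow {f : ℝ → ℝ} {C γ ε₁ : ℝ} (hγ : 0 < γ) (hε₁ : 0 < ε₁)
    (hf₀ : ∀ ε, 0 ≤ f ε) (hf : ∀ ε, 0 < ε → ε < ε₁ → f ε ≤ C * ε ^ γ) :
    Tendsto f (𝓝[>] 0) (𝓝 0) := by
  have hlim : Tendsto (fun ε : ℝ => C * ε ^ γ) (𝓝[>] 0) (𝓝 0) := by
    have := ((Real.continuousAt_rpow_const 0 γ (.inr hγ.le)).tendsto.const_mul C).mono_left
      (nhdsWithin_le_nhds (s := Ioi 0))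
    rwa [Real.zero_rpow hγ.ne', mul_zero] at this
  refine squeeze_zero' (.of_forall hf₀) ?_ hlim
  filter_upwards [Ioo_mem_nhdsGT hε₁] with ε hε using hf ε hε.1 hε.2

namespace Config

variable (cfg : Config) {ε : ℝ}

theorem particle_subset_closedBall (hε : 0 < ε) (i : Fin (cfg.Nε ε)) :
    cfg.particle ε i ⊆ closedBall (cfg.xc ε i) (ε ^ cfg.α * cfg.a) :=
  part_subset_closedBall cfg.hb cfg.hba.le _ (by positivity) _

theorem isCompact_particle (ε : ℝ) (i : Fin (cfg.Nε ε)) : IsCompact (cfg.particle ε i) :=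
  isCompact_part cfg.hb cfg.hba.le _ _ _

theorem volume_real_particle_le (hε : 0 < ε) (i : Fin (cfg.Nε ε)) :
    volume.real (cfg.particle ε i) ≤
      volume.real (closedBall (0 : E3) cfg.a) * ε ^ (3 * cfg.α) := by
  calc volume.real (cfg.particle ε i)
      ≤ (ε ^ cfg.α) ^ 3 * volume.real (closedBall (0 : E3) cfg.a) :=
        volume_real_part_le cfg.hb cfg.hba.le _ (by positivity) _
    _ = volume.real (closedBall (0 : E3) cfg.a) * ε ^ (3 * cfg.α) := by
        rw [← Real.rpow_natCast, ← Real.rpow_mul hε.le, Nat.cast_ofNat, mul_comm cfg.α, mul_comm]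

theorem exists_particle_radius_le :
    ∃ ε₁, 0 < ε₁ ∧ ε₁ ≤ cfg.ε₀ ∧
      ∀ ε, 0 < ε → ε < ε₁ → ε ^ cfg.α * cfg.a ≤ cfg.d * ε / 2 := by
  have ha : 0 < cfg.a := cfg.hb.trans cfg.hba
  have hd := cfg.hd
  refine ⟨min cfg.ε₀ ((cfg.d / 2 / cfg.a) ^ (cfg.α - 1)⁻¹),
    lt_min cfg.hε₀ (by positivity), min_le_left _ _, fun ε hε hε₁ => ?_⟩
  rw [mul_div_right_comm]
  exact Real.rpow_mul_le_mul_of_lt_rpow_inv ha (by positivity) cfg.hα1 hε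
    (hε₁.trans_le (min_le_right _ _))

section SmallParticles

variable (hε : 0 < ε) (hε₀ : ε < cfg.ε₀) (hrad : ε ^ cfg.α * cfg.a ≤ cfg.d * ε / 2)
  {i j : Fin (cfg.Nε ε)} (hij : i ≠ j)
include hε hε₀ hrad hij

theorem half_sep_le_dist_of_mem_particle {x : E3} (hx : x ∈ cfg.particle ε i) :
    cfg.d * ε / 2 ≤ dist x (cfg.xc ε j) := by
  have hxi := mem_closedBall.1 (cfg.particle_subset_closedBall hε i hx)
  have hsep := cfg.hsep_lo ε hε hε₀ i j hij
  have htri := dist_triangle_left (cfg.xc ε i) (cfg.xc ε j) x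
  linarith

variable {K m β : ℝ} (hK : 0 ≤ K) (hm : 0 ≤ m)
include hK hm

theorem norm_field_le_of_mem_particle {H : E3 → E3}
    (hH : ∀ x : E3, cfg.d * ε / 2 ≤ dist x (cfg.xc ε j) →
      ‖H x‖ ≤ K * m * ε ^ β * (volume (cfg.particle ε j)).toReal / dist x (cfg.xc ε j) ^ 3)
    {x : E3} (hx : x ∈ cfg.particle ε i) :
    ‖H x‖ ≤ K * m * ε ^ β * (volume.real (closedBall (0 : E3) cfg.a) * ε ^ (3 * cfg.α)) /
      (cfg.d * ε / 2) ^ 3 := by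
  have hd := cfg.hd
  have hxj := cfg.half_sep_le_dist_of_mem_particle hε hε₀ hrad hij hx
  refine (hH x hxj).trans ?_
  gcongr
  exact cfg.volume_real_particle_le hε j

theorem integral_abs_inner_le {H M : E3 → E3}
    (hH : ∀ x : E3, cfg.d * ε / 2 ≤ dist x (cfg.xc ε j) →
      ‖H x‖ ≤ K * m * ε ^ β * (volume (cfg.particle ε j)).toReal / dist x (cfg.xc ε j) ^ 3)
    (hM : ∀ x ∈ cfg.particle ε i, ‖M x‖ ≤ m * ε ^ β) :
    ∫ x in cfg.particle ε i, |⟪H x, M x⟫| ≤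
      8 * K * m ^ 2 * volume.real (closedBall (0 : E3) cfg.a) ^ 2 / cfg.d ^ 3 *
        ε ^ (6 * cfg.α + 2 * β - 3) := by
  have hd := cfg.hd
  have hpow : ε ^ (6 * cfg.α + 2 * β - 3) = (ε ^ (3 * cfg.α)) ^ 2 * (ε ^ β) ^ 2 / ε ^ 3 := by
    rw [show 6 * cfg.α + 2 * β - 3 = 3 * cfg.α * 2 + β * 2 - 3 by ring, Real.rpow_sub hε,
      Real.rpow_add hε, Real.rpow_mul hε.le (3 * cfg.α), Real.rpow_mul hε.le β, Real.rpow_two,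
      Real.rpow_two]
    norm_cast
  calc ∫ x in cfg.particle ε i, |⟪H x, M x⟫|
      ≤ K * m * ε ^ β * (volume.real (closedBall (0 : E3) cfg.a) * ε ^ (3 * cfg.α)) /
          (cfg.d * ε / 2) ^ 3 * (m * ε ^ β) * volume.real (cfg.particle ε i) :=
        setIntegral_abs_inner_le (cfg.isCompact_particle ε i).measure_lt_top
          (fun x hx => cfg.norm_field_le_of_mem_particle hε hε₀ hrad hij hK hm hH hx) hM
    _ ≤ K * m * ε ^ β * (volume.real (closedBall (0 : E3) cfg.a) * ε ^ (3 * cfg.α)) /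
          (cfg.d * ε / 2) ^ 3 * (m * ε ^ β) *
          (volume.real (closedBall (0 : E3) cfg.a) * ε ^ (3 * cfg.α)) := by
        gcongr
        exact cfg.volume_real_particle_le hε i
    _ = 8 * K * m ^ 2 * volume.real (closedBall (0 : E3) cfg.a) ^ 2 / cfg.d ^ 3 *
          ε ^ (6 * cfg.α + 2 * β - 3) := by
        rw [hpow]
        field_simp
        ring

end SmallParticles

theorem sum_integral_abs_inner_le (hε : 0 < ε) (hε₀ : ε < cfg.ε₀)
    (hrad : ε ^ cfg.α * cfg.a ≤ cfg.d * ε / 2) {K m β : ℝ} (hK : 0 ≤ K) (hm : 0 ≤ m)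
    {H M : Fin (cfg.Nε ε) → E3 → E3}
    (hH : ∀ j, ∀ x : E3, cfg.d * ε / 2 ≤ dist x (cfg.xc ε j) →
      ‖H j x‖ ≤ K * m * ε ^ β * (volume (cfg.particle ε j)).toReal / dist x (cfg.xc ε j) ^ 3)
    (hM : ∀ i, ∀ x ∈ cfg.particle ε i, ‖M i x‖ ≤ m * ε ^ β) :
    (∑ i, ∑ j, if i = j then 0 else ∫ x in cfg.particle ε i, |⟪H j x, M i x⟫|) ≤
      cfg.NN ^ 2 * (8 * K * m ^ 2 * volume.real (closedBall (0 : E3) cfg.a) ^ 2 / cfg.d ^ 3) *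
        ε ^ (6 * cfg.α + 2 * β - 9) := by
  have hd := cfg.hd
  set c := 8 * K * m ^ 2 * volume.real (closedBall (0 : E3) cfg.a) ^ 2 / cfg.d ^ 3
  calc _ ≤ (cfg.Nε ε : ℝ) ^ 2 * (c * ε ^ (6 * cfg.α + 2 * β - 3)) := by
        simpa using sum_sum_ite_zero_le_card_sq_mul _ (by positivity) fun i j hij =>
          cfg.integral_abs_inner_le hε hε₀ hrad hij hK hm (hH j) (hM i)
    _ ≤ (cfg.NN * ε⁻¹ ^ 3) ^ 2 * (c * ε ^ (6 * cfg.α + 2 * β - 3)) := by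
        gcongr
        exact cfg.hcount ε hε hε₀
    _ = cfg.NN ^ 2 * c * ε ^ (6 * cfg.α + 2 * β - 9) := by
        rw [show 6 * cfg.α + 2 * β - 3 = 6 * cfg.α + 2 * β - 9 + 6 by ring, Real.rpow_add hε]
        norm_cast
        field_simp

end Config

theorem stmt17_general (cfg : Config) (β₁ K m : ℝ)
    (hβ : 9 < 6 * cfg.α + 2 * β₁) (hK : 0 < K) (hm : 0 < m)
    (Hf : (ε : ℝ) → Fin (cfg.Nε ε) → E3 → E3)
    (mg : (ε : ℝ) → Fin (cfg.Nε ε) → E3 → E3)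
    (hHf : ∀ ε : ℝ, 0 < ε → ε < cfg.ε₀ → ∀ j, ∀ x : E3,
      cfg.d * ε / 2 ≤ dist x (cfg.xc ε j) →
      ‖Hf ε j x‖ ≤ K * m * ε ^ β₁ * (volume (cfg.particle ε j)).toReal /
        dist x (cfg.xc ε j) ^ (3 : ℕ))
    (hmg : ∀ ε : ℝ, 0 < ε → ε < cfg.ε₀ → ∀ i, ∀ x ∈ cfg.particle ε i,
      ‖mg ε i x‖ ≤ m * ε ^ β₁) :
    ∃ C : ℝ, 0 < C ∧ ∃ ε₁ : ℝ, 0 < ε₁ ∧ ε₁ ≤ cfg.ε₀ ∧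
      (∀ ε : ℝ, 0 < ε → ε < ε₁ →
        (∑ i : Fin (cfg.Nε ε), ∑ j : Fin (cfg.Nε ε),
            if i = j then 0 else
              ∫ x in cfg.particle ε i, |(⟪Hf ε j x, mg ε i x⟫ : ℝ)|) ≤
          C * ε ^ (6 * cfg.α + 2 * β₁ - 9)) ∧
      Tendsto (fun ε =>
          ∑ i : Fin (cfg.Nε ε), ∑ j : Fin (cfg.Nε ε),
            if i = j then 0 else
              ∫ x in cfg.particle ε i, |(⟪Hf ε j x, mg ε i x⟫ : ℝ)|)
        (𝓝[>] (0 : ℝ)) (𝓝 0) := by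
  obtain ⟨ε₁, hε₁, hε₁ε₀, hrad⟩ := cfg.exists_particle_radius_le
  have hW : 0 < volume.real (closedBall (0 : E3) cfg.a) :=
    ENNReal.toReal_pos (measure_closedBall_pos _ _ (cfg.hb.trans cfg.hba)).ne'
      measure_closedBall_lt_top.ne
  have hd := cfg.hd
  have hNN := cfg.hNN
  have hbound := fun ε (hε : 0 < ε) (hεε₁ : ε < ε₁) =>
    cfg.sum_integral_abs_inner_le hε (hεε₁.trans_le hε₁ε₀) (hrad ε hε hεε₁) hK.le hm.le
      (hHf ε hε (hεε₁.trans_le hε₁ε₀)) (hmg ε hε (hεε₁.trans_le hε₁ε₀))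
  refine ⟨_, by positivity, ε₁, hε₁, hε₁ε₀, hbound,
    tendsto_nhdsGT_zero_of_le_mul_rpow (by linarith) hε₁ (fun ε => ?_) hbound⟩
  refine Finset.sum_nonneg fun i _ => Finset.sum_nonneg fun j _ => ?_
  split_ifs
  exacts [le_rfl, integral_nonneg fun x => abs_nonneg _]

/-- the inter-particle magnetic interaction is negligible. Let
`1 < α < 2` and `β₁` satisfy `6α + 2β₁ > 9`, and `K, m > 0`. Suppose each particle
`𝒫_j^ε` generates a field `H_j` with `|H_j(x)| ≤ K m ε^{β₁} Vol(𝒫_j^ε) |x − x_j^ε|⁻³`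
for `|x − x_j^ε| ≥ dε/2`, and each particle `𝒫_i^ε` carries a magnetization density
`m_i` with `|m_i| ≤ m ε^{β₁}` on `𝒫_i^ε`. Then there is `C > 0` independent of `ε` with
`Σ_{i≠j} ∫_{𝒫_i^ε} |H_j · m_i| dV ≤ C ε^{6α + 2β₁ − 9}`; in particular this sum tends
to `0` as `ε → 0⁺`. -/
theorem stmt17 (cfg : Config) (β₁ K m : ℝ)
    (hβ : 9 < 6 * cfg.α + 2 * β₁) (hK : 0 < K) (hm : 0 < m)
    (Hf : (ε : ℝ) → Fin (cfg.Nε ε) → E3 → E3)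
    (mg : (ε : ℝ) → Fin (cfg.Nε ε) → E3 → E3)
    (hHf : ∀ ε : ℝ, 0 < ε → ε < cfg.ε₀ → ∀ j, ∀ x : E3,
      cfg.d * ε / 2 ≤ dist x (cfg.xc ε j) →
      ‖Hf ε j x‖ ≤ K * m * ε ^ β₁ * (volume (cfg.particle ε j)).toReal /
        dist x (cfg.xc ε j) ^ (3 : ℕ))
    (hmg : ∀ ε : ℝ, 0 < ε → ε < cfg.ε₀ → ∀ i, ∀ x ∈ cfg.particle ε i,
      ‖mg ε i x‖ ≤ m * ε ^ β₁)
    (hmeas : ∀ ε : ℝ, 0 < ε → ε < cfg.ε₀ → ∀ i j,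
      AEStronglyMeasurable (fun x : E3 => (⟪Hf ε j x, mg ε i x⟫ : ℝ))
        (volume.restrict (cfg.particle ε i))) :
    ∃ C : ℝ, 0 < C ∧ ∃ ε₁ : ℝ, 0 < ε₁ ∧ ε₁ ≤ cfg.ε₀ ∧
      (∀ ε : ℝ, 0 < ε → ε < ε₁ →
        (∑ i : Fin (cfg.Nε ε), ∑ j : Fin (cfg.Nε ε),
            if i = j then 0 else
              ∫ x in cfg.particle ε i, |(⟪Hf ε j x, mg ε i x⟫ : ℝ)|) ≤
          C * ε ^ (6 * cfg.α + 2 * β₁ - 9)) ∧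
      Tendsto (fun ε =>
          ∑ i : Fin (cfg.Nε ε), ∑ j : Fin (cfg.Nε ε),
            if i = j then 0 else
              ∫ x in cfg.particle ε i, |(⟪Hf ε j x, mg ε i x⟫ : ℝ)|)
        (𝓝[>] (0 : ℝ)) (𝓝 0) :=
  stmt17_general cfg β₁ K m hβ hK hm Hf mg hHf hmg
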